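/- arXiv:0705.4200 — 7 statements merged into one kernel-verified Lean document; each statement's English description precedes it below -/
import Mathlib

section
/- Let μ be a probability measure on an interval I ⊆ ℝ and let x₁,…,xₙ be continuous μ-integrable functions on I that are not μ-a.e. affinely dependent (i.e., for every hyperplane π : α₁x₁+⋯+αₙxₙ = β with (α₁,…,αₙ) ≠ 0, the set {t ∈ I : (x₁(t),…,xₙ(t)) ∉ π} has positive μ-measure). Then the vector of integrals J = (∫_I x₁ dμ, …, ∫_I xₙ dμ) lies in the interior of the convex hull of the curve t ↦ (x₁(t),…,xₙ(t)). -/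
open MeasureTheory

/-! If `J` were not interior to the convex hull `K` of the curve, a supporting hyperplane would
give a nonzero functional `f = ∑ αₖ yₖ` with `f ≤ f J` on `K`, so `∑ αₖ xₖ(t) ≤ f J` on `I`. This
function has mean `f J` for the probability measure `μ` on `I`, hence equals `f J` almost everywhere
on `I`, contradicting nondegeneracy. In finite dimension a supporting hyperplane exists at every
non-interior point: by Hahn–Banach when `K` has interior points, and otherwise because `K` lies in a
proper affine subspace. -/

theorem exists_dual_ne_zero_forall_eq_of_affineSpan_ne_top {k V : Type*} [Field k]
    [AddCommGroup V] [Module k V] {s : Set V} {p : V} (hp : p ∈ s) (hs : affineSpan k s ≠ ⊤) :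
    ∃ f : Module.Dual k V, f ≠ 0 ∧ ∀ y ∈ s, f y = f p := by
  have hp' : p ∈ affineSpan k s := subset_affineSpan k s hp
  have hdir : (affineSpan k s).direction < ⊤ :=
    lt_top_iff_ne_top.2 fun h ↦ hs ((AffineSubspace.direction_eq_top_iff_of_nonempty ⟨p, hp'⟩).1 h)
  obtain ⟨f, hf0, hfdir⟩ := Submodule.exists_dual_map_eq_bot_of_lt_top hdir inferInstance
  refine ⟨f, hf0, fun y hy ↦ ?_⟩
  have hyp : f (y - p) ∈ (affineSpan k s).direction.map f :=
    Submodule.mem_map_of_mem (AffineSubspace.vsub_mem_direction (subset_affineSpan k s hy) hp')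
  rw [hfdir, Submodule.mem_bot, map_sub, sub_eq_zero] at hyp
  exact hyp

theorem Convex.exists_ne_zero_forall_le_of_notMem_interior {E : Type*} [NormedAddCommGroup E]
    [NormedSpace ℝ E] [FiniteDimensional ℝ E] {s : Set E} {z : E} (hs : Convex ℝ s)
    (hne : s.Nonempty) (hz : z ∉ interior s) :
    ∃ f : StrongDual ℝ E, f ≠ 0 ∧ ∀ y ∈ s, f y ≤ f z := by
  rcases (interior s).eq_empty_or_nonempty with hs_int | hs_int
  · obtain ⟨p, hp⟩ := hne
    have hspan : affineSpan ℝ s ≠ ⊤ := fun h ↦ by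
      simpa [hs_int] using hs.interior_nonempty_iff_affineSpan_eq_top.2 h
    obtain ⟨f, hf0, hfs⟩ := exists_dual_ne_zero_forall_eq_of_affineSpan_ne_top hp hspan
    set g := LinearMap.toContinuousLinearMap f
    have hg0 : g ≠ 0 := (map_ne_zero_iff _ LinearMap.toContinuousLinearMap.injective).2 hf0
    rcases le_total (g p) (g z) with hpz | hzp
    · exact ⟨g, hg0, fun y hy ↦ (hfs y hy).trans_le hpz⟩
    · refine ⟨-g, neg_ne_zero.2 hg0, fun y hy ↦ ?_⟩
      simpa [g, hfs y hy] using hzp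
  · exact geometric_hahn_banach_of_nonempty_interior_point hs hz hs_int

theorem StrongDual.apply_eq_sum_mul_apply_single {ι : Type*} [Fintype ι] [DecidableEq ι]
    (f : StrongDual ℝ (ι → ℝ)) (v : ι → ℝ) : f v = ∑ k, f (Pi.single k 1) * v k := by
  conv_lhs => rw [pi_eq_sum_univ' v]
  simp [mul_comm]

theorem measure_setOf_ne_eq_zero_of_le_of_setIntegral_eq {α : Type*} [MeasurableSpace α]
    {μ : Measure α} {s : Set α} (hs : MeasurableSet s) (hμs : μ s = 1) {g : α → ℝ} {c : ℝ}
    (hg : IntegrableOn g s μ) (hle : ∀ t ∈ s, g t ≤ c) (hgs : ∫ t in s, g t ∂μ = c) :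
    μ {t ∈ s | g t ≠ c} = 0 := by
  have : IsProbabilityMeasure (μ.restrict s) := ⟨by rwa [Measure.restrict_apply_univ]⟩
  have hae : g =ᵐ[μ.restrict s] fun _ ↦ c :=
    (integral_eq_iff_of_ae_le hg (integrable_const c) ((ae_restrict_iff' hs).2 (ae_of_all _ hle))).1
      (by simpa using hgs)
  rw [Filter.EventuallyEq, ae_restrict_iff' hs, ae_iff] at hae
  simpa using hae

theorem integrals_mem_interior_convexHull_general (n : ℕ) (I : Set ℝ) (hI : I.OrdConnected)
    (μ : Measure ℝ) (hμI : μ I = 1)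
    (x : Fin n → ℝ → ℝ)
    (hint : ∀ k, IntegrableOn (x k) I μ)
    (hnd : ∀ (α : Fin n → ℝ), α ≠ 0 → ∀ β : ℝ,
      0 < μ {t ∈ I | ∑ k, α k * x k t ≠ β}) :
    (fun k => ∫ t in I, x k t ∂μ) ∈
      interior (convexHull ℝ ((fun t => fun k => x k t) '' I)) := by
  set J : Fin n → ℝ := fun k => ∫ t in I, x k t ∂μ
  have hIne : I.Nonempty := nonempty_of_measure_ne_zero (μ := μ) (by simp [hμI])
  by_contra hJ
  obtain ⟨f, hf0, hfle⟩ := (convex_convexHull ℝ _).exists_ne_zero_forall_le_of_notMem_interior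
    ((hIne.image _).mono (subset_convexHull ℝ _)) hJ
  set α : Fin n → ℝ := fun k ↦ f (Pi.single k 1)
  have hf : ∀ v, f v = ∑ k, α k * v k := f.apply_eq_sum_mul_apply_single
  have hα : α ≠ 0 := fun h ↦ hf0 (ContinuousLinearMap.ext fun v ↦ by simp [hf v, h])
  have hle : ∀ t ∈ I, ∑ k, α k * x k t ≤ f J := fun t ht ↦
    (hf _).symm.trans_le (hfle _ (subset_convexHull ℝ _ ⟨t, ht, rfl⟩))
  have hmean : ∫ t in I, ∑ k, α k * x k t ∂μ = f J := by
    rw [integral_finsetSum _ fun k _ ↦ (hint k).const_mul _, hf]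
    exact Finset.sum_congr rfl fun k _ ↦ integral_const_mul _ _
  exact (hnd α hα (f J)).ne' <| measure_setOf_ne_eq_zero_of_le_of_setIntegral_eq hI.measurableSet hμI
    (integrable_finsetSum _ fun k _ ↦ (hint k).const_mul _) hle hmean

theorem integrals_mem_interior_convexHull (n : ℕ) (I : Set ℝ) (hI : I.OrdConnected)
    (μ : Measure ℝ) [IsProbabilityMeasure μ] (hμI : μ I = 1)
    (x : Fin n → ℝ → ℝ) (hx : ∀ k, ContinuousOn (x k) I)
    (hint : ∀ k, IntegrableOn (x k) I μ)
    (hnd : ∀ (α : Fin n → ℝ), α ≠ 0 → ∀ β : ℝ,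
      0 < μ {t ∈ I | ∑ k, α k * x k t ≠ β}) :
    (fun k => ∫ t in I, x k t ∂μ) ∈
      interior (convexHull ℝ ((fun t => fun k => x k t) '' I)) :=
  integrals_mem_interior_convexHull_general n I hI μ hμI x hint hnd
end

section
/- Let X be a real-valued random variable concentrated on an interval I ⊆ ℝ, and let f, g be continuous functions on I such that f(X) and g(X) have finite second moments. Then there exist λ ∈ [0,1] and t₁, t₂ ∈ I such that E[f(X)g(X)] − E[f(X)]E[g(X)] = λ(1−λ)(f(t₁) − f(t₂))(g(t₁) − g(t₂)). -/
/-!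
Put `q = x₁ + i f` with `x₁ = (f - E f)(g - E g)`. The mean of a continuous planar curve over a
preconnected parameter set lies on a chord `[q t₁, q t₂]`: after centring, if no chord passed
through `0`, no two values of `q` would point in opposite directions, so `arg q` would be continuous
with oscillation at most `π` (otherwise the intermediate value theorem yields opposite directions).
Then `q` lies in a closed half-plane `0 ≤ Re (w q)`, so mean zero forces `Re (w q) = 0` almost
everywhere, and on that line the mean-zero coordinate `Im (w q)` takes a nonpositive and a
nonnegative value, which is a chord through `0` after all. The real and imaginary parts of
`E q = λ q(t₁) + (1 - λ) q(t₂)` then give the covariance formula.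
-/

open MeasureTheory ProbabilityTheory Complex Real
open scoped ComplexOrder

section IntermediateValue

variable {α : Type*} [TopologicalSpace α] {I : Set α} {φ : α → ℝ} {c : ℝ}

theorem IsPreconnected.forall_lt_add_of_forall_ne_add (hI : IsPreconnected I)
    (hφ : ContinuousOn φ I) (hc : 0 < c) (h : ∀ s ∈ I, ∀ t ∈ I, φ s ≠ φ t + c) :
    ∀ s ∈ I, ∀ t ∈ I, φ s < φ t + c := by
  intro s hs t ht
  by_contra! hle
  obtain ⟨r, hr, hrt⟩ := hI.intermediate_value ht hs hφ ⟨by linarith, hle⟩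
  exact h r hr t ht hrt

theorem IsPreconnected.exists_forall_mem_Icc_of_forall_ne_add (hI : IsPreconnected I)
    (hφ : ContinuousOn φ I) (hc : 0 < c) (hbdd : BddBelow (φ '' I))
    (h : ∀ s ∈ I, ∀ t ∈ I, φ s ≠ φ t + c) :
    ∃ m, ∀ t ∈ I, φ t ∈ Set.Icc m (m + c) := by
  refine ⟨sInf (φ '' I), fun t ht => ⟨csInf_le hbdd ⟨t, ht, rfl⟩, ?_⟩⟩
  have : φ t - c ≤ sInf (φ '' I) := le_csInf ⟨φ t, t, ht, rfl⟩ <| by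
    rintro _ ⟨s, hs, rfl⟩
    linarith [hI.forall_lt_add_of_forall_ne_add hφ hc h t ht s hs]
  linarith

end IntermediateValue

namespace Complex

theorem sameRay_neg_of_arg_eq_add_pi {z w : ℂ} (hz : z ≠ 0) (h : arg z = arg w + π) :
    SameRay ℝ (-z) w := by
  refine sameRay_of_arg_eq (arg_coe_angle_eq_iff.1 ?_)
  rw [arg_neg_coe_angle hz, h, Real.Angle.coe_add, add_assoc, Real.Angle.coe_pi_add_coe_pi,
    add_zero]

variable {α : Type*} [TopologicalSpace α] {I : Set α}

theorem exists_forall_re_mul_nonneg_of_mem_slitPlane {p : α → ℂ} (hI : IsPreconnected I)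
    (hp : ContinuousOn p I) (hslit : ∀ t ∈ I, p t ∈ slitPlane)
    (h : ∀ s ∈ I, ∀ t ∈ I, ¬SameRay ℝ (-p s) (p t)) :
    ∃ w : ℂ, w ≠ 0 ∧ ∀ t ∈ I, 0 ≤ (w * p t).re := by
  have hφ : ContinuousOn (fun t => arg (p t)) I := fun t ht =>
    (continuousAt_arg (hslit t ht)).comp_continuousWithinAt (hp t ht)
  have hbdd : BddBelow ((fun t => arg (p t)) '' I) :=
    ⟨-π, by rintro _ ⟨t, -, rfl⟩; exact (neg_pi_lt_arg _).le⟩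
  obtain ⟨m, hm⟩ := hI.exists_forall_mem_Icc_of_forall_ne_add hφ Real.pi_pos hbdd
    fun s hs t ht hst =>
      h s hs t ht (sameRay_neg_of_arg_eq_add_pi (slitPlane_ne_zero (hslit s hs)) hst)
  refine ⟨exp (-(m + π / 2 : ℝ) * Complex.I), exp_ne_zero _, fun t ht => ?_⟩
  have hpolar : exp (-(m + π / 2 : ℝ) * Complex.I) * p t =
      ‖p t‖ * exp ((arg (p t) - (m + π / 2) : ℝ) * Complex.I) := by
    conv_lhs => rw [← norm_mul_exp_arg_mul_I (p t)]
    rw [mul_left_comm, ← exp_add]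
    push_cast
    ring_nf
  rw [hpolar, re_ofReal_mul, exp_ofReal_mul_I_re]
  exact mul_nonneg (norm_nonneg _) <| Real.cos_nonneg_of_mem_Icc
    ⟨by linarith [(hm t ht).1], by linarith [(hm t ht).2]⟩

theorem exists_forall_re_mul_nonneg {q : α → ℂ} (hI : IsPreconnected I)
    (hq : ContinuousOn q I) (hne : I.Nonempty)
    (h : ∀ s ∈ I, ∀ t ∈ I, ¬SameRay ℝ (-q s) (q t)) :
    ∃ w : ℂ, w ≠ 0 ∧ ∀ t ∈ I, 0 ≤ (w * q t).re := by
  obtain ⟨t₀, ht₀⟩ := hne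
  have hq₀ : q t₀ ≠ 0 := fun h₀ => h t₀ ht₀ t₀ ht₀ (by simp [h₀])
  have hscale : ∀ s t, SameRay ℝ (-(q s / q t₀)) (q t / q t₀) → SameRay ℝ (-q s) (q t) :=
    fun s t hst => by simpa [hq₀] using hst.map (LinearMap.mulRight ℝ (q t₀))
  have hslit : ∀ t ∈ I, q t / q t₀ ∈ slitPlane := fun t ht => by
    refine mem_slitPlane_iff_not_le_zero.2 fun hle => h t ht t₀ ht₀ (hscale t t₀ ?_)
    refine sameRay_of_arg_eq ?_
    rw [div_self hq₀, arg_one, arg_eq_zero_iff_zero_le]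
    exact neg_nonneg.2 hle
  obtain ⟨w, hw, hre⟩ := exists_forall_re_mul_nonneg_of_mem_slitPlane hI (hq.div_const _) hslit
    fun s hs t ht hst => h s hs t ht (hscale s t hst)
  refine ⟨w / q t₀, div_ne_zero hw hq₀, fun t ht => ?_⟩
  simpa only [div_mul_eq_mul_div, mul_div_assoc] using hre t ht

end Complex

section Kowalewski

variable {α : Type*} [MeasurableSpace α] [TopologicalSpace α] {μ : Measure α}
  [IsProbabilityMeasure μ] {I : Set α} {q : α → ℂ}

theorem exists_zero_mem_segment_of_integral_eq_zero (hI : IsPreconnected I)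
    (hμI : ∀ᵐ t ∂μ, t ∈ I) (hq : ContinuousOn q I) (hqi : Integrable q μ)
    (h₀ : ∫ t, q t ∂μ = 0) : ∃ s ∈ I, ∃ t ∈ I, (0 : ℂ) ∈ segment ℝ (q s) (q t) := by
  simp only [mem_segment_iff_sameRay, zero_sub, sub_zero]
  by_contra! h
  obtain ⟨w, hw, hre⟩ := exists_forall_re_mul_nonneg hI hq hμI.exists h
  have hwqi : Integrable (fun t => w * q t) μ := hqi.const_mul w
  have hwq₀ : ∫ t, w * q t ∂μ = 0 := by rw [integral_const_mul, h₀, mul_zero]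
  have hxi : Integrable (fun t => (w * q t).re) μ := hwqi.re
  have hyi : Integrable (fun t => (w * q t).im) μ := hwqi.im
  have hre₀ : ∀ᵐ t ∂μ, (w * q t).re = 0 :=
    (integral_eq_zero_iff_of_nonneg_ae (hμI.mono hre) hxi).1 <| by
      simpa [hwq₀] using integral_re hwqi
  have him₀ : ∫ t, (w * q t).im ∂μ = 0 := by simpa [hwq₀] using integral_im hwqi
  have hN : μ {t | ¬(t ∈ I ∧ (w * q t).re = 0)} = 0 := ae_iff.1 (hμI.and hre₀)
  have hline : ∀ t, (w * q t).re = 0 → q t = (w * q t).im • (Complex.I / w) := fun t ht => by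
    rw [real_smul, ← mul_div_assoc, eq_div_iff hw, mul_comm (q t)]
    exact Complex.ext (by simp [ht]) (by simp)
  obtain ⟨s, hs, hs_le⟩ := exists_notMem_null_le_integral hyi hN
  obtain ⟨t, ht, ht_ge⟩ := exists_notMem_null_integral_le hyi hN
  rw [Set.mem_ofPred_eq, not_not] at hs ht
  refine h s hs.1 t ht.1 ?_
  rw [hline s hs.2, hline t ht.2, ← neg_smul]
  exact sameRay_smul_smul_of_mul_nonneg (mul_nonneg (by linarith) (by linarith))

theorem exists_integral_mem_segment (hI : IsPreconnected I) (hμI : ∀ᵐ t ∂μ, t ∈ I)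
    (hq : ContinuousOn q I) (hqi : Integrable q μ) :
    ∃ s ∈ I, ∃ t ∈ I, ∫ t, q t ∂μ ∈ segment ℝ (q s) (q t) := by
  set m := ∫ t, q t ∂μ
  obtain ⟨s, hs, t, ht, h⟩ := exists_zero_mem_segment_of_integral_eq_zero (q := fun t => q t - m)
    hI hμI (hq.sub continuousOn_const) (hqi.sub (integrable_const m)) <| by
      rw [integral_sub hqi (integrable_const m), integral_const, probReal_univ, one_smul, sub_self]
  refine ⟨s, hs, t, ht, ?_⟩
  simpa using (mem_segment_translate ℝ m).2 h

end Kowalewski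

theorem covariance_representation_lambda (I : Set ℝ) (hI : I.OrdConnected)
    (μ : Measure ℝ) [IsProbabilityMeasure μ] (hμI : μ I = 1)
    (f g : ℝ → ℝ) (hf : ContinuousOn f I) (hg : ContinuousOn g I)
    (hf2 : MemLp f 2 μ) (hg2 : MemLp g 2 μ) :
    ∃ lam ∈ Set.Icc (0:ℝ) 1, ∃ t₁ ∈ I, ∃ t₂ ∈ I,
      (∫ t, f t * g t ∂μ) - (∫ t, f t ∂μ) * (∫ t, g t ∂μ) =
        lam * (1 - lam) * (f t₁ - f t₂) * (g t₁ - g t₂) := by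
  have hμI' : ∀ᵐ t ∂μ, t ∈ I :=
    (ae_mem_iff_measure_eq hI.measurableSet.nullMeasurableSet).2 (by rw [hμI, measure_univ])
  set x₁ : ℝ → ℝ := fun t => (f t - ∫ t, f t ∂μ) * (g t - ∫ t, g t ∂μ)
  have hx₁ : Integrable x₁ μ :=
    (hf2.sub (memLp_const _)).integrable_mul (hg2.sub (memLp_const _))
  have hfi : Integrable f μ := hf2.integrable one_le_two
  obtain ⟨s, hs, t, ht, a, b, ha, hb, hab, hmean⟩ :=
    exists_integral_mem_segment (q := fun t => (x₁ t : ℂ) + f t * Complex.I) hI.isPreconnected hμI'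
      (by fun_prop) (hx₁.ofReal.add (hfi.ofReal.mul_const Complex.I))
  have hint : ∫ t, ((x₁ t : ℂ) + f t * Complex.I) ∂μ =
      ((∫ t, x₁ t ∂μ : ℝ) : ℂ) + (∫ t, f t ∂μ : ℝ) * Complex.I := by
    rw [integral_add hx₁.ofReal (hfi.ofReal.mul_const _), integral_mul_const,
      integral_complex_ofReal, integral_complex_ofReal]
  rw [hint] at hmean
  have hx₁_mean : a * x₁ s + b * x₁ t = ∫ t, x₁ t ∂μ := by simpa using congrArg re hmean
  have hf_mean : a * f s + b * f t = ∫ t, f t ∂μ := by simpa using congrArg im hmean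
  obtain rfl : b = 1 - a := by linarith
  refine ⟨a, ⟨ha, by linarith⟩, s, hs, t, ht, ?_⟩
  have hcov : (∫ t, f t * g t ∂μ) - (∫ t, f t ∂μ) * (∫ t, g t ∂μ) = ∫ t, x₁ t ∂μ :=
    (covariance_eq_sub hf2 hg2).symm
  rw [hcov, ← hx₁_mean]
  linear_combination (a * (g s - g t) + (g t - ∫ t, g t ∂μ)) * hf_mean
end

section
/- Let X be a real-valued random variable concentrated on an interval I ⊆ ℝ, and let f, g be continuous functions on I with m_f ≤ f(t) ≤ M_f and m_g ≤ g(t) ≤ M_g for all t ∈ I. Then |Cov(f(X), g(X))| ≤ (1/4)(M_f − m_f)(M_g − m_g). -/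
/-!
By Cauchy–Schwarz, `cov[f X, g X]² ≤ Var[f X] · Var[g X]`, and by Popoviciu's inequality a
random variable with values in `[m, M]` has variance at most `((M - m) / 2)²`.
-/

open MeasureTheory ProbabilityTheory

namespace ProbabilityTheory

variable {Ω : Type*} {mΩ : MeasurableSpace Ω} {μ : Measure Ω} {X Y : Ω → ℝ}

lemma sq_covariance_le_variance_mul_variance [IsFiniteMeasure μ] (hX : MemLp X 2 μ)
    (hY : MemLp Y 2 μ) : cov[X, Y; μ] ^ 2 ≤ Var[X; μ] * Var[Y; μ] := by
  -- `t ↦ Var[t • X + Y]` is a nonnegative quadratic polynomial, so its discriminant is `≤ 0`.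
  have hquad : ∀ t : ℝ, 0 ≤ Var[X; μ] * (t * t) + 2 * cov[X, Y; μ] * t + Var[Y; μ] := by
    intro t
    have h := variance_add (hX.const_smul t) hY
    rw [variance_smul, covariance_smul_left] at h
    nlinarith [variance_nonneg (t • X + Y) μ]
  have hdiscr := discrim_le_zero hquad
  rw [discrim] at hdiscr
  linarith

lemma abs_covariance_le_of_bounded [IsProbabilityMeasure μ] {a b c d : ℝ}
    (hX : ∀ᵐ ω ∂μ, X ω ∈ Set.Icc a b) (hY : ∀ᵐ ω ∂μ, Y ω ∈ Set.Icc c d)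
    (hXm : AEMeasurable X μ) (hYm : AEMeasurable Y μ) :
    |cov[X, Y; μ]| ≤ (b - a) / 2 * ((d - c) / 2) := by
  obtain ⟨ω, hωX, hωY⟩ := (hX.and hY).exists
  have hab : a ≤ b := hωX.1.trans hωX.2
  have hcd : c ≤ d := hωY.1.trans hωY.2
  refine abs_le_of_sq_le_sq ?_ (by nlinarith)
  calc cov[X, Y; μ] ^ 2
      ≤ Var[X; μ] * Var[Y; μ] :=
        sq_covariance_le_variance_mul_variance (memLp_of_bounded hX hXm.aestronglyMeasurable 2)
          (memLp_of_bounded hY hYm.aestronglyMeasurable 2)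
    _ ≤ ((b - a) / 2) ^ 2 * ((d - c) / 2) ^ 2 :=
        mul_le_mul (variance_le_sq_of_bounded hX hXm) (variance_le_sq_of_bounded hY hYm)
          (variance_nonneg Y μ) (sq_nonneg _)
    _ = ((b - a) / 2 * ((d - c) / 2)) ^ 2 := by ring

end ProbabilityTheory

lemma ContinuousOn.aemeasurable_of_ae_mem {α β : Type*} [MeasurableSpace α] [TopologicalSpace α]
    [OpensMeasurableSpace α] [MeasurableSpace β] [TopologicalSpace β] [BorelSpace β]
    {μ : Measure α} {f : α → β} {s : Set α} (hf : ContinuousOn f s) (hs : MeasurableSet s)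
    (hμs : ∀ᵐ x ∂μ, x ∈ s) : AEMeasurable f μ := by
  simpa only [Measure.restrict_eq_self_of_ae_mem hμs] using hf.aemeasurable (μ := μ) hs

theorem gruss_general (I : Set ℝ) (hI : I.OrdConnected)
    (μ : Measure ℝ) [IsProbabilityMeasure μ] (hμI : μ I = 1)
    (f g : ℝ → ℝ) (hf : ContinuousOn f I) (hg : ContinuousOn g I)
    (mf Mf mg Mg : ℝ)
    (hfb : ∀ t ∈ I, mf ≤ f t ∧ f t ≤ Mf)
    (hgb : ∀ t ∈ I, mg ≤ g t ∧ g t ≤ Mg) :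
    |(∫ t, f t * g t ∂μ) - (∫ t, f t ∂μ) * (∫ t, g t ∂μ)| ≤
      (1 / 4) * (Mf - mf) * (Mg - mg) := by
  have hI_ae : ∀ᵐ t ∂μ, t ∈ I := by
    rwa [ae_iff, ← Set.compl_def, prob_compl_eq_zero_iff hI.measurableSet]
  have hf_ae : ∀ᵐ t ∂μ, f t ∈ Set.Icc mf Mf := hI_ae.mono hfb
  have hg_ae : ∀ᵐ t ∂μ, g t ∈ Set.Icc mg Mg := hI_ae.mono hgb
  have hfm := hf.aemeasurable_of_ae_mem hI.measurableSet hI_ae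
  have hgm := hg.aemeasurable_of_ae_mem hI.measurableSet hI_ae
  have hcov := abs_covariance_le_of_bounded hf_ae hg_ae hfm hgm
  rw [covariance_eq_sub (memLp_of_bounded hf_ae hfm.aestronglyMeasurable 2)
    (memLp_of_bounded hg_ae hgm.aestronglyMeasurable 2), Pi.mul_def] at hcov
  exact hcov.trans_eq (by ring)
end

section
/- Let C : I → ℝ² be a continuous curve on an interval I ⊆ ℝ. Then every point of the convex hull of the image of C is a convex combination of at most 2 points of the curve; i.e., for every v in the convex hull there exist t₁, t₂ ∈ I and λ ∈ [0,1] with v = λC(t₁) + (1−λ)C(t₂). -/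
/-!
Every point of the convex hull of `S` is reached by repeatedly taking segments from points of `S`,
so it suffices that a segment from a point of `S` to a point of a segment of `S` stays in the union
of segments of `S`. After translating, this says: if `0` is a positive combination of three points
`x, y, p` of a preconnected planar set `S`, then `0` lies on a segment of `S`. If `x, y` are
collinear with `0` this is immediate. Otherwise the closed rays `-ℝ≥0 x` and `-ℝ≥0 y` cut the plane
into the open cone spanned by `-x, -y`, which contains `p`, and the rest, which contains `x`; so `S`
meets one of the two rays, at some `z`, and `0` lies on the segment from `z` to `x` or to `y`.
-/

open Module Set

section

variable {𝕜 E : Type*} [Field 𝕜] [LinearOrder 𝕜] [IsStrictOrderedRing 𝕜] [AddCommGroup E] [Module 𝕜 E]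

theorem convexHull_subset_of_segment_subset {S T : Set E} (hST : S ⊆ T)
    (hT : ∀ p ∈ S, ∀ w ∈ T, segment 𝕜 p w ⊆ T) : convexHull 𝕜 S ⊆ T := by
  classical
  rw [convexHull_eq_union_convexHull_finite_subsets]
  refine iUnion₂_subset fun t => ?_
  induction t using Finset.induction_on with
  | empty => simp
  | insert p t _ ih =>
    intro ht
    rw [Finset.coe_insert, insert_subset_iff] at ht
    rcases t.eq_empty_or_nonempty with rfl | hne
    · simpa using hST ht.1
    rw [Finset.coe_insert, convexHull_insert (by exact_mod_cast hne), convexJoin_singleton_left]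
    exact iUnion₂_subset fun w hw => hT p ht.1 w (ih ht.2 hw)

end

variable {E : Type*} [NormedAddCommGroup E] [NormedSpace ℝ E]

theorem IsPreconnected.exists_sameRay_neg_of_linearIndependent (hE : finrank ℝ E = 2)
    {S : Set E} (hS : IsPreconnected S) {x y p : E} (hxy : LinearIndependent ℝ ![x, y])
    (hx : x ∈ S) (hp : p ∈ S) {a b c : ℝ} (ha : 0 < a) (hb : 0 < b) (hc : 0 < c)
    (h : a • x + b • y + c • p = 0) : ∃ z ∈ S, SameRay ℝ (-z) x ∨ SameRay ℝ (-z) y := by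
  have : FiniteDimensional ℝ E := .of_finrank_pos (by omega)
  let B := basisOfLinearIndependentOfCardEqFinrank hxy (by simp [hE])
  set u := fun z => B.repr z 0
  set v := fun z => B.repr z 1
  have hu : Continuous u := (B.coord 0).continuous_of_finiteDimensional
  have hv : Continuous v := (B.coord 1).continuous_of_finiteDimensional
  have hdecomp : ∀ z, z = u z • x + v z • y := fun z => by
    simpa [Fin.sum_univ_two, B, u, v] using (B.sum_repr z).symm
  have hx0 : B 0 = x := by simp [B]
  have hy1 : B 1 = y := by simp [B]
  have hux : u x = 1 := by simp [u, ← hx0]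
  rw [← hx0, ← hy1] at h
  have hpu : a + c * u p = 0 := by simpa [u] using congr(B.repr $h 0)
  have hpv : b + c * v p = 0 := by simpa [v] using congr(B.repr $h 1)
  by_contra! hmiss
  -- In the coordinates `u, v` of the basis `x, y`, removing the rays `-ℝ≥0 x` and `-ℝ≥0 y` splits
  -- the plane into the disjoint open sets `u < 0 ∧ v < 0` and `0 < u ∨ 0 < v`.
  have hcover : S ⊆ {z | u z < 0 ∧ v z < 0} ∪ {z | 0 < u z ∨ 0 < v z} := by
    intro z hz
    by_contra! hzUV
    simp only [mem_union, mem_ofPred_eq, not_or, not_and, not_lt] at hzUV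
    obtain ⟨hUV, hu0, hv0⟩ := hzUV
    rcases hu0.lt_or_eq with hu0 | hu0
    · refine (hmiss z hz).1 ?_
      rw [hdecomp z, le_antisymm hv0 (hUV hu0), zero_smul, add_zero, ← neg_smul]
      exact SameRay.sameRay_nonneg_smul_left x (by linarith)
    · refine (hmiss z hz).2 ?_
      rw [hdecomp z, hu0, zero_smul, zero_add, ← neg_smul]
      exact SameRay.sameRay_nonneg_smul_left y (by linarith)
  obtain ⟨z, -, hzU, hzV⟩ := hS {z | u z < 0 ∧ v z < 0} {z | 0 < u z ∨ 0 < v z}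
    ((isOpen_lt hu continuous_const).inter (isOpen_lt hv continuous_const))
    ((isOpen_lt continuous_const hu).union (isOpen_lt continuous_const hv))
    hcover ⟨p, hp, by constructor <;> nlinarith⟩ ⟨x, hx, Or.inl (hux ▸ one_pos)⟩
  rcases hzV with h | h <;> linarith [hzU.1, hzU.2]

theorem IsPreconnected.exists_sameRay_neg (hE : finrank ℝ E = 2) {S : Set E}
    (hS : IsPreconnected S) {x y p : E} (hx : x ∈ S) (hy : y ∈ S) (hp : p ∈ S)
    {a b c : ℝ} (ha : 0 < a) (hb : 0 < b) (hc : 0 < c) (h : a • x + b • y + c • p = 0) :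
    ∃ z ∈ S, ∃ w ∈ S, SameRay ℝ (-z) w := by
  by_cases hxy : LinearIndependent ℝ ![x, y]
  · obtain ⟨z, hz, hzx | hzy⟩ :=
      hS.exists_sameRay_neg_of_linearIndependent hE hxy hx hp ha hb hc h
    exacts [⟨z, hz, x, hx, hzx⟩, ⟨z, hz, y, hy, hzy⟩]
  rcases sameRay_or_sameRay_neg_iff_not_linearIndependent.mpr hxy with hxy | hxy
  · refine ⟨p, hp, x, hx, ?_⟩
    have hcp : c • -p = a • x + b • y := by linear_combination (norm := module) -h
    rw [← inv_smul_smul₀ hc.ne' (-p), hcp]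
    refine SameRay.nonneg_smul_left ?_ (inv_nonneg.mpr hc.le)
    exact (SameRay.sameRay_nonneg_smul_left x ha.le).add_left (hxy.symm.nonneg_smul_left hb.le)
  · exact ⟨y, hy, x, hx, hxy.symm⟩

theorem IsPreconnected.exists_mem_segment_of_mem_segment (hE : finrank ℝ E = 2) {S : Set E}
    (hS : IsPreconnected S) {p q r w v : E} (hp : p ∈ S) (hq : q ∈ S) (hr : r ∈ S)
    (hw : w ∈ segment ℝ q r) (hv : v ∈ segment ℝ p w) :
    ∃ x ∈ S, ∃ y ∈ S, v ∈ segment ℝ x y := by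
  rw [← insert_endpoints_openSegment] at hv
  rcases hv with rfl | rfl | hv
  · exact ⟨v, hp, v, hp, left_mem_segment ℝ v v⟩
  · exact ⟨q, hq, r, hr, hw⟩
  rw [← insert_endpoints_openSegment] at hw
  rcases hw with rfl | rfl | hw
  · exact ⟨p, hp, w, hq, openSegment_subset_segment ℝ p w hv⟩
  · exact ⟨p, hp, w, hr, openSegment_subset_segment ℝ p w hv⟩
  obtain ⟨α, β, hα, hβ, hαβ, hv⟩ := hv
  obtain ⟨γ, δ, hγ, hδ, hγδ, hw⟩ := hw
  have hrel : (β * γ) • (q - v) + (β * δ) • (r - v) + α • (p - v) = 0 := by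
    subst hv hw
    obtain rfl : α = 1 - β := by linarith
    obtain rfl : γ = 1 - δ := by linarith
    module
  have hS' : IsPreconnected ((· - v) '' S) := hS.image _ (by fun_prop)
  obtain ⟨-, ⟨x, hx, rfl⟩, -, ⟨y, hy, rfl⟩, hxy⟩ := hS'.exists_sameRay_neg hE
    (mem_image_of_mem _ hq) (mem_image_of_mem _ hr) (mem_image_of_mem _ hp)
    (mul_pos hβ hγ) (mul_pos hβ hδ) hα hrel
  exact ⟨x, hx, y, hy, mem_segment_iff_sameRay.mpr (by rwa [neg_sub] at hxy)⟩

theorem IsPreconnected.convexHull_eq_biUnion_segment (hE : finrank ℝ E = 2) {S : Set E}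
    (hS : IsPreconnected S) : convexHull ℝ S = ⋃ x ∈ S, ⋃ y ∈ S, segment ℝ x y := by
  refine (convexHull_subset_of_segment_subset (fun x hx => ?_) fun p hp w hw v hv => ?_).antisymm
    (iUnion₂_subset fun x hx => iUnion₂_subset fun y hy => segment_subset_convexHull hx hy)
  · exact mem_biUnion hx (mem_biUnion hx (left_mem_segment ℝ x x))
  · obtain ⟨q, hq, r, hr, hw⟩ := by simpa only [mem_iUnion, exists_prop] using hw
    obtain ⟨x, hx, y, hy, hv⟩ := hS.exists_mem_segment_of_mem_segment hE hp hq hr hw hv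
    exact mem_biUnion hx (mem_biUnion hy hv)

theorem caratheodory_planar_curve (I : Set ℝ) (hI : I.OrdConnected)
    (C : ℝ → ℝ × ℝ) (hC : ContinuousOn C I)
    (v : ℝ × ℝ) (hv : v ∈ convexHull ℝ (C '' I)) :
    ∃ t₁ ∈ I, ∃ t₂ ∈ I, ∃ lam ∈ Set.Icc (0:ℝ) 1,
      v = lam • C t₁ + (1 - lam) • C t₂ := by
  rw [(hI.isPreconnected.image C hC).convexHull_eq_biUnion_segment (by simp)] at hv
  obtain ⟨-, ⟨t₁, ht₁, rfl⟩, -, ⟨t₂, ht₂, rfl⟩, a, b, ha, hb, hab, rfl⟩ :=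
    by simpa only [mem_iUnion, exists_prop] using hv
  exact ⟨t₁, ht₁, t₂, ht₂, a, ⟨ha, by linarith⟩, by rw [← hab, add_sub_cancel_left]⟩
end

section
/- Let μ be a finite positive measure on a compact interval [a,b], and let f, g be continuous functions on [a,b]. Then there exist t₁, t₂ ∈ [a,b] and λ ∈ [0, μ([a,b])] such that ∫ f dμ = λf(t₁) + (μ([a,b]) − λ)f(t₂) and ∫ g dμ = λg(t₁) + (μ([a,b]) − λ)g(t₂) simultaneously. -/
/-!
Put `w = (f - ⨍ f) + i (g - ⨍ g)`, a continuous curve in `ℂ` with `∫ w dμ = 0`. It suffices to find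
`s, t` and `r ≥ 0` with `w t = -r w s`: then `λ = M r / (1 + r)`, `M = μ [a, b]`, works. If there
were no such pair, all quotients `w / w t₀` would lie in the slit plane, and as the image of `w` is
compact and connected their arguments would fill an interval of length `< π` (length `π` would give
such a pair). So the image lies in an open half-plane `{Re (z u) > 0}`, and `Re (u ∫ w dμ) > 0`.
-/

open MeasureTheory Set

namespace Complex

theorem eq_neg_mul_of_arg_eq_arg_add_pi {x y : ℂ} (hx : x ≠ 0) (h : arg y = arg x + Real.pi) :
    y = -((‖y‖ / ‖x‖ : ℝ) * x) := by
  have hx' : (‖x‖ : ℂ) ≠ 0 := by simpa using hx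
  calc y = ‖y‖ * exp ((arg x + Real.pi : ℝ) * I) := by rw [← h, norm_mul_exp_arg_mul_I]
    _ = -(‖y‖ * exp (arg x * I)) := by
      push_cast
      rw [add_mul, exp_add, exp_pi_mul_I]
      ring
    _ = -((‖y‖ / ‖x‖ : ℝ) * (‖x‖ * exp (arg x * I))) := by
      push_cast
      field_simp
    _ = -((‖y‖ / ‖x‖ : ℝ) * x) := by rw [norm_mul_exp_arg_mul_I]

theorem re_mul_exp_neg_mul_I_pos {x : ℂ} (hx : x ≠ 0) {c : ℝ} (h : |arg x - c| < Real.pi / 2) :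
    0 < (x * exp (-c * I)).re := by
  have hexp : x * exp (-c * I) = ‖x‖ * exp ((arg x - c : ℝ) * I) := by
    conv_lhs => rw [← norm_mul_exp_arg_mul_I x]
    rw [mul_assoc, ← exp_add]
    push_cast
    ring_nf
  rw [hexp, re_ofReal_mul, exp_ofReal_mul_I_re]
  exact mul_pos (norm_pos_iff.mpr hx) (Real.cos_pos_of_mem_Ioo (abs_lt.mp h))

theorem div_mem_slitPlane {z w : ℂ} (hz : z ≠ 0) (h : ∀ r : ℝ, 0 ≤ r → w ≠ -(r * z)) :
    w / z ∈ slitPlane := by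
  rw [mem_slitPlane_iff_not_le_zero]
  intro hle
  obtain ⟨hre, him⟩ := le_def.mp hle
  have hq : w / z = ((w / z).re : ℂ) := ext rfl (by simpa using him)
  refine h (-(w / z).re) (by simpa using hre) ?_
  generalize (w / z).re = q at hq
  rw [← div_mul_cancel₀ w hz, hq]
  push_cast
  ring

theorem exists_forall_re_mul_pos {S : Set ℂ} (hS : IsCompact S) (hS' : IsPreconnected S)
    (hneg : ∀ z ∈ S, ∀ w ∈ S, ∀ r : ℝ, 0 ≤ r → w ≠ -(r * z)) :
    ∃ u : ℂ, ∀ z ∈ S, 0 < (z * u).re := by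
  rcases S.eq_empty_or_nonempty with rfl | ⟨z₀, hz₀⟩
  · simp
  have hne : ∀ z ∈ S, z ≠ 0 := fun z hz h => hneg z hz z hz 0 le_rfl (by simp [h])
  have hz₀' := hne z₀ hz₀
  set φ : ℂ → ℝ := fun z => arg (z / z₀)
  have hφ : ContinuousOn φ S := continuousOn_arg.comp (continuous_id.div_const z₀).continuousOn
    fun z hz => div_mem_slitPlane hz₀' (hneg z₀ hz₀ z hz)
  obtain ⟨s, hs, hmin⟩ := hS.exists_isMinOn ⟨z₀, hz₀⟩ hφ
  obtain ⟨t, ht, hmax⟩ := hS.exists_isMaxOn ⟨z₀, hz₀⟩ hφ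
  have hwidth : φ t < φ s + Real.pi := by
    by_contra! h
    obtain ⟨z, hz, hφz⟩ := hS'.intermediate_value hs ht hφ
      ⟨le_add_of_nonneg_right Real.pi_pos.le, h⟩
    have hzs := eq_neg_mul_of_arg_eq_arg_add_pi (div_ne_zero (hne s hs) hz₀') hφz
    rw [div_eq_iff hz₀'] at hzs
    exact hneg s hs z hz (‖z / z₀‖ / ‖s / z₀‖) (by positivity) (hzs.trans (by field_simp))
  refine ⟨exp (-((φ s + φ t) / 2 : ℝ) * I) / z₀, fun z hz => ?_⟩
  rw [← mul_div_assoc, ← div_mul_eq_mul_div]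
  have hlow : φ s ≤ φ z := hmin hz
  have hupp : φ z ≤ φ t := hmax hz
  exact re_mul_exp_neg_mul_I_pos (div_ne_zero (hne z hz) hz₀')
    (abs_lt.mpr ⟨by linarith, by linarith⟩)

end Complex

section Measure

variable {X : Type*} [TopologicalSpace X] [T2Space X] [MeasurableSpace X] [OpensMeasurableSpace X]
  {μ : Measure X} [IsFiniteMeasureOnCompacts μ] {K : Set X}

theorem setIntegral_pos_of_continuousOn_of_pos (hK : IsCompact K) (hμK : μ K ≠ 0) {f : X → ℝ}
    (hf : ContinuousOn f K) (hpos : ∀ x ∈ K, 0 < f x) : 0 < ∫ x in K, f x ∂μ := by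
  rw [setIntegral_pos_iff_support_of_nonneg_ae
    ((ae_restrict_iff' hK.measurableSet).mpr (.of_forall fun x hx => (hpos x hx).le))
    (hf.integrableOn_compact hK)]
  have hsupp : Function.support f ∩ K = K := inter_eq_right.mpr fun x hx => (hpos x hx).ne'
  rwa [hsupp, pos_iff_ne_zero]

theorem exists_eq_neg_mul_of_setIntegral_eq_zero (hK : IsCompact K) (hK' : IsPreconnected K)
    (hμK : μ K ≠ 0) {w : X → ℂ} (hw : ContinuousOn w K) (h : ∫ x in K, w x ∂μ = 0) :
    ∃ s ∈ K, ∃ t ∈ K, ∃ r : ℝ, 0 ≤ r ∧ w t = -(r * w s) := by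
  by_contra! hneg
  obtain ⟨u, hu⟩ := Complex.exists_forall_re_mul_pos (hK.image_of_continuousOn hw)
    (hK'.image w hw) (by rintro _ ⟨s, hs, rfl⟩ _ ⟨t, ht, rfl⟩; exact hneg s hs t ht)
  have hpos : 0 < ∫ x in K, (w x * u).re ∂μ :=
    setIntegral_pos_of_continuousOn_of_pos hK hμK
      (Complex.continuous_re.comp_continuousOn (hw.mul continuousOn_const))
      fun x hx => hu _ (mem_image_of_mem w hx)
  have hzero : ∫ x in K, (w x * u).re ∂μ = 0 := by
    simp_rw [← RCLike.re_to_complex]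
    rw [integral_re ((hw.integrableOn_compact hK).mul_const u), integral_mul_const, h, zero_mul,
      map_zero]
  exact hpos.ne' hzero

theorem exists_sub_setAverage_eq_neg_mul (hK : IsCompact K) (hK' : IsPreconnected K)
    (hμK : μ K ≠ 0) {f g : X → ℝ} (hf : ContinuousOn f K) (hg : ContinuousOn g K) :
    ∃ s ∈ K, ∃ t ∈ K, ∃ r : ℝ, 0 ≤ r ∧
      f t - ⨍ x in K, f x ∂μ = -(r * (f s - ⨍ x in K, f x ∂μ)) ∧
      g t - ⨍ x in K, g x ∂μ = -(r * (g s - ⨍ x in K, g x ∂μ)) := by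
  set w : X → ℂ := fun x => ((f x - ⨍ x in K, f x ∂μ : ℝ) : ℂ) +
    ((g x - ⨍ x in K, g x ∂μ : ℝ) : ℂ) * Complex.I
  have hw : ContinuousOn w K := by fun_prop
  have hwi : IntegrableOn w K μ := hw.integrableOn_compact hK
  have hw0 : ∫ x in K, w x ∂μ = 0 := by
    apply Complex.ext
    · rw [← RCLike.re_to_complex, ← integral_re hwi]
      simpa [w] using setAverage_sub_setAverage hK.measure_ne_top f
    · rw [← RCLike.im_to_complex, ← integral_im hwi]
      simpa [w] using setAverage_sub_setAverage hK.measure_ne_top g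
  obtain ⟨s, hs, t, ht, r, hr, hst⟩ := exists_eq_neg_mul_of_setIntegral_eq_zero hK hK' hμK hw hw0
  exact ⟨s, hs, t, ht, r, hr, by simpa [w] using congrArg Complex.re hst,
    by simpa [w] using congrArg Complex.im hst⟩

end Measure

theorem two_point_quadrature (a b : ℝ) (hab : a < b)
    (μ : Measure ℝ) [IsFiniteMeasure μ]
    (f g : ℝ → ℝ) (hf : ContinuousOn f (Set.Icc a b)) (hg : ContinuousOn g (Set.Icc a b)) :
    ∃ t₁ ∈ Set.Icc a b, ∃ t₂ ∈ Set.Icc a b,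
      ∃ lam ∈ Set.Icc (0:ℝ) (μ (Set.Icc a b)).toReal,
        (∫ t in Set.Icc a b, f t ∂μ = lam * f t₁ + ((μ (Set.Icc a b)).toReal - lam) * f t₂) ∧
        (∫ t in Set.Icc a b, g t ∂μ = lam * g t₁ + ((μ (Set.Icc a b)).toReal - lam) * g t₂) := by
  set K := Icc a b
  set M := (μ K).toReal
  rcases eq_or_ne (μ K) 0 with hμK | hμK
  · have ha : a ∈ K := left_mem_Icc.mpr hab.le
    have hK : μ.restrict K = 0 := Measure.restrict_eq_zero.mpr hμK
    exact ⟨a, ha, a, ha, 0, ⟨le_rfl, ENNReal.toReal_nonneg⟩, by simp [hK, M, hμK],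
      by simp [hK, M, hμK]⟩
  obtain ⟨s, hs, t, ht, r, hr, hft, hgt⟩ :=
    exists_sub_setAverage_eq_neg_mul isCompact_Icc isPreconnected_Icc hμK hf hg
  have hM : 0 < M := ENNReal.toReal_pos hμK (measure_ne_top μ K)
  have hquad : ∀ {φ : ℝ → ℝ}, φ t - ⨍ x in K, φ x ∂μ = -(r * (φ s - ⨍ x in K, φ x ∂μ)) →
      ∫ x in K, φ x ∂μ = M * r / (1 + r) * φ s + (M - M * r / (1 + r)) * φ t := by
    intro φ hφ
    rw [← measure_smul_setAverage φ (measure_ne_top μ K), smul_eq_mul, measureReal_def]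
    field_simp
    linear_combination (-M) * hφ
  refine ⟨s, hs, t, ht, M * r / (1 + r), ⟨by positivity, ?_⟩, hquad hft, hquad hgt⟩
  rw [div_le_iff₀ (by positivity)]
  nlinarith
end

section
/- Let X be a random variable concentrated on an interval I ⊆ ℝ and let f be a continuous function on I with E[f(X)²] < ∞. Then there exist t₁, t₂ ∈ I such that Var(f(X)) = (1/4)(f(t₁) − f(t₂))². -/
/-! If `4 Var ≤ (f s - f t)²` for some `s, t ∈ I`, the intermediate value theorem applied to
`u ↦ (f s - f u)² / 4` on the interval `I` gives the representation. Such a pair exists: otherwise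
`f` is bounded on `I`, with `(M - m)² ≤ 4 Var` for `m`, `M` its infimum and supremum there, so
Popoviciu's inequality `Var ≤ ((M - m) / 2)²` is an equality. Equality forces `f(X) ∈ {m, M}`
almost surely with mean `(m + M) / 2`, so both `m` and `M` are values of `f` on `I`, and the pair
realising them contradicts the assumption. -/

open MeasureTheory ProbabilityTheory Set

namespace ProbabilityTheory

variable {Ω : Type*} {mΩ : MeasurableSpace Ω} {μ : Measure Ω} [IsProbabilityMeasure μ] {X : Ω → ℝ}

lemma integral_eq_midpoint_and_ae_eq_or_eq_of_variance_eq {a b : ℝ}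
    (h : ∀ᵐ ω ∂μ, X ω ∈ Icc a b) (hX : AEMeasurable X μ) (hvar : Var[X; μ] = ((b - a) / 2) ^ 2) :
    μ[X] = (a + b) / 2 ∧ ∀ᵐ ω ∂μ, X ω = a ∨ X ω = b := by
  have hmean : μ[X] = (a + b) / 2 := by
    have := variance_le_sub_mul_sub h hX
    nlinarith [sq_nonneg (μ[X] - (a + b) / 2)]
  refine ⟨hmean, ?_⟩
  have hL2 : MemLp X 2 μ := memLp_of_bounded h hX.aestronglyMeasurable 2
  have hsq : Integrable (fun ω ↦ (X ω - (a + b) / 2) ^ 2) μ :=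
    (hL2.sub (memLp_const _)).integrable_sq
  have hslack : ∀ x : ℝ, (b - x) * (x - a) = ((b - a) / 2) ^ 2 - (x - (a + b) / 2) ^ 2 :=
    fun x ↦ by ring
  have hint : ∫ ω, (b - X ω) * (X ω - a) ∂μ = 0 := by
    simp_rw [hslack]
    rw [integral_sub (integrable_const _) hsq, ← hmean, ← variance_eq_integral hX, hvar]
    simp
  have hnonneg : 0 ≤ᵐ[μ] fun ω ↦ (b - X ω) * (X ω - a) :=
    h.mono fun ω hω ↦ mul_nonneg (sub_nonneg.2 hω.2) (sub_nonneg.2 hω.1)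
  have hint' : Integrable (fun ω ↦ (b - X ω) * (X ω - a)) μ := by
    simp_rw [hslack]; exact (integrable_const _).sub hsq
  filter_upwards [(integral_eq_zero_iff_of_nonneg_ae hnonneg hint').1 hint] with ω hω
  rcases mul_eq_zero.1 hω with hb | ha
  · exact Or.inr (sub_eq_zero.1 hb).symm
  · exact Or.inl (sub_eq_zero.1 ha)

lemma frequently_eq_of_ae_eq_or_eq_of_integral_ne {a b : ℝ}
    (h : ∀ᵐ ω ∂μ, X ω = a ∨ X ω = b) (hmean : μ[X] ≠ a) : ∃ᵐ ω ∂μ, X ω = b := by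
  refine fun hne ↦ hmean ?_
  have : X =ᵐ[μ] fun _ ↦ a := by
    filter_upwards [h, hne] with ω hω hωb using hω.resolve_right hωb
  simp [integral_congr_ae this]

lemma exists_four_mul_variance_le_sq_sub {S : Set ℝ} (hS : ∀ᵐ ω ∂μ, X ω ∈ S)
    (hX : AEMeasurable X μ) : ∃ a ∈ S, ∃ b ∈ S, 4 * Var[X; μ] ≤ (a - b) ^ 2 := by
  by_contra! hlt
  obtain ⟨ω₀, hω₀⟩ := hS.exists
  have hS₀ : S.Nonempty := ⟨X ω₀, hω₀⟩
  set σ := √(Var[X; μ])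
  have hσ : 0 < σ := Real.sqrt_pos.2 (by nlinarith [hlt _ hω₀ _ hω₀])
  have hσsq : (2 * σ) ^ 2 = 4 * Var[X; μ] := by
    rw [mul_pow, Real.sq_sqrt (variance_nonneg X μ)]; norm_num
  have hsub : ∀ a ∈ S, ∀ b ∈ S, a - b < 2 * σ := fun a ha b hb ↦
    lt_of_pow_lt_pow_left₀ 2 (by positivity) (hσsq ▸ hlt a ha b hb)
  have hbddA : BddAbove S := ⟨X ω₀ + 2 * σ, fun a ha ↦ by linarith [hsub a ha _ hω₀]⟩
  have hbddB : BddBelow S := ⟨X ω₀ - 2 * σ, fun b hb ↦ by linarith [hsub _ hω₀ b hb]⟩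
  set m := sInf S
  set M := sSup S
  have hmM : m ≤ M := (csInf_le hbddB hω₀).trans (le_csSup hbddA hω₀)
  have hosc : M - m ≤ 2 * σ := by
    suffices M ≤ m + 2 * σ by linarith
    refine csSup_le hS₀ fun a ha ↦ ?_
    have : a - 2 * σ ≤ m := le_csInf hS₀ fun b hb ↦ by linarith [hsub a ha b hb]
    linarith
  have hIcc : ∀ᵐ ω ∂μ, X ω ∈ Icc m M :=
    hS.mono fun ω hω ↦ ⟨csInf_le hbddB hω, le_csSup hbddA hω⟩
  have hvar : Var[X; μ] = ((M - m) / 2) ^ 2 := by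
    refine le_antisymm (variance_le_sq_of_bounded hIcc hX) ?_
    nlinarith [pow_le_pow_left₀ (sub_nonneg.2 hmM) hosc 2]
  obtain ⟨hmean, hae⟩ := integral_eq_midpoint_and_ae_eq_or_eq_of_variance_eq hIcc hX hvar
  have hne : m ≠ M := fun h ↦ hσ.ne' (by simp [σ, hvar, h])
  have hM : M ∈ S := by
    obtain ⟨ω, hωM, hωS⟩ := (frequently_eq_of_ae_eq_or_eq_of_integral_ne hae
      (by rw [hmean]; contrapose! hne; linarith)).and_eventually hS |>.exists
    exact hωM ▸ hωS
  have hm : m ∈ S := by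
    obtain ⟨ω, hωm, hωS⟩ := (frequently_eq_of_ae_eq_or_eq_of_integral_ne
      (hae.mono fun _ ↦ Or.symm) (by rw [hmean]; contrapose! hne; linarith)).and_eventually hS
      |>.exists
    exact hωm ▸ hωS
  nlinarith [hlt M hM m hm]

end ProbabilityTheory

theorem variance_representation (I : Set ℝ) (hI : I.OrdConnected)
    (μ : Measure ℝ) [IsProbabilityMeasure μ] (hμI : μ I = 1)
    (f : ℝ → ℝ) (hf : ContinuousOn f I) (hf2 : MemLp f 2 μ) :
    ∃ t₁ ∈ I, ∃ t₂ ∈ I,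
      (∫ t, f t ^ 2 ∂μ) - (∫ t, f t ∂μ) ^ 2 = (1 / 4) * (f t₁ - f t₂) ^ 2 := by
  have hvar : (∫ t, f t ^ 2 ∂μ) - (∫ t, f t ∂μ) ^ 2 = Var[f; μ] := by
    rw [variance_eq_sub hf2]; rfl
  have hI_ae : ∀ᵐ t ∂μ, t ∈ I := by
    rw [ae_mem_iff_measure_eq hI.measurableSet.nullMeasurableSet, hμI, measure_univ]
  obtain ⟨_, ⟨s, hs, rfl⟩, _, ⟨t, ht, rfl⟩, hst⟩ := exists_four_mul_variance_le_sq_sub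
    (hI_ae.mono fun _ ↦ mem_image_of_mem f) hf2.aemeasurable
  have hcont : ContinuousOn (fun u ↦ (1 / 4) * (f s - f u) ^ 2) I := by fun_prop
  obtain ⟨u, hu, hfu⟩ := hI.isPreconnected.intermediate_value hs ht hcont
    (show Var[f; μ] ∈ Icc _ _ from ⟨by simp [variance_nonneg], by linarith⟩)
  exact ⟨s, hs, u, hu, hvar.trans hfu.symm⟩
end

section
/- Let (uₙ) be a bounded sequence in ℝ with u ≤ uₙ ≤ U for all n, and let (pₙ) be nonnegative weights with Σₙ pₙ = 1. Then Σₙ pₙuₙ² − (Σₙ pₙuₙ)² ≤ (1/4)(U − u)². -/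
/-! On `[l, U]` the parabola `x ^ 2` lies below its chord `(U + l) x - l U`, because
`(x - l) (U - x) ≥ 0`. Averaging against the weights bounds the second moment by
`(U + l) m - l U`, where `m` is the mean, and completing the square gives
`(U + l) m - l U - m ^ 2 = (U - l) ^ 2 / 4 - (m - (U + l) / 2) ^ 2 ≤ (U - l) ^ 2 / 4`. -/

open Set

lemma sq_le_chord_of_mem_Icc {l U x : ℝ} (hx : x ∈ Icc l U) : x ^ 2 ≤ (U + l) * x - l * U := by
  nlinarith [mul_nonneg (sub_nonneg.2 hx.1) (sub_nonneg.2 hx.2)]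

section WeightedSums

variable {ι : Type*} {p u : ι → ℝ}

lemma Summable.mul_of_abs_le (hp : Summable p) (hp0 : ∀ i, 0 ≤ p i) {C : ℝ}
    (hu : ∀ i, |u i| ≤ C) : Summable fun i => p i * u i :=
  (hp.mul_right C).of_norm_bounded fun i => by
    rw [Real.norm_eq_abs, abs_mul, abs_of_nonneg (hp0 i)]
    exact mul_le_mul_of_nonneg_left (hu i) (hp0 i)

lemma tsum_mul_sq_le_chord (hp0 : ∀ i, 0 ≤ p i) (hp1 : ∑' i, p i = 1) {l U : ℝ}
    (hu : ∀ i, u i ∈ Icc l U) :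
    ∑' i, p i * u i ^ 2 ≤ (U + l) * ∑' i, p i * u i - l * U := by
  have hp : Summable p := by
    by_contra h
    simp [tsum_eq_zero_of_not_summable h] at hp1
  have hbound : ∀ i, |u i| ≤ max |l| |U| := fun i => abs_le_max_abs_abs (hu i).1 (hu i).2
  have hpu : Summable fun i => p i * u i := hp.mul_of_abs_le hp0 hbound
  have hpu2 : Summable fun i => p i * u i ^ 2 :=
    hp.mul_of_abs_le hp0 fun i => by
      rw [abs_pow]
      exact pow_le_pow_left₀ (abs_nonneg _) (hbound i) 2
  calc ∑' i, p i * u i ^ 2 ≤ ∑' i, ((U + l) * (p i * u i) - l * U * p i) :=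
        hpu2.tsum_le_tsum (fun i => by
          linear_combination mul_le_mul_of_nonneg_left (sq_le_chord_of_mem_Icc (hu i)) (hp0 i))
          ((hpu.mul_left _).sub (hp.mul_left _))
    _ = (U + l) * ∑' i, p i * u i - l * U := by
        rw [(hpu.mul_left _).tsum_sub (hp.mul_left _), tsum_mul_left, tsum_mul_left, hp1, mul_one]

end WeightedSums

theorem discrete_variance_bound (p u : ℕ → ℝ) (hp : ∀ n, 0 ≤ p n) (hp1 : ∑' n, p n = 1)
    (l U : ℝ) (hu : ∀ n, l ≤ u n ∧ u n ≤ U) :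
    (∑' n, p n * u n ^ 2) - (∑' n, p n * u n) ^ 2 ≤ (1 / 4) * (U - l) ^ 2 := by
  have hmoment := tsum_mul_sq_le_chord hp hp1 hu
  linear_combination hmoment + sq_nonneg (∑' n, p n * u n - (U + l) / 2)
end
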